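/- Let 0 < p₂ ≤ p₁ ≤ ∞ and 1 ≤ n ≤ N < ∞. Then the approximation and Gelfand numbers of the identity map from ℓ_{p₁}^N to ℓ_{p₂}^N satisfy a_n(id : ℓ_{p₁}^N → ℓ_{p₂}^N) = c_n(id : ℓ_{p₁}^N → ℓ_{p₂}^N) = (N − n + 1)^{1/p₂ − 1/p₁}, where 1/∞ is interpreted as 0. -/

import Mathlib

open scoped ENNReal BigOperators

/-- The ℓ_p quasi-norm on ℝ^N, for `p : ℝ≥0∞` (with `p = ∞` giving the sup-norm). -/
noncomputable def pNorm (p : ℝ≥0∞) {N : ℕ} (x : Fin N → ℝ) : ℝ :=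
  if p = ∞ then ⨆ i, |x i| else (∑ i, |x i| ^ p.toReal) ^ (1 / p.toReal)

/-- The n-th Kolmogorov number of the identity map `id : ℓ_p^N → ℓ_q^N`. -/
noncomputable def kolmogorovNumber (p q : ℝ≥0∞) (N n : ℕ) : ℝ :=
  sInf { r : ℝ | ∃ V : Submodule ℝ (Fin N → ℝ), Module.finrank ℝ (↥V) < n ∧
    r = sSup { s : ℝ | ∃ x : Fin N → ℝ, pNorm p x ≤ 1 ∧
      s = sInf { t : ℝ | ∃ v ∈ V, t = pNorm q (x - v) } } }

/-- The n-th Gelfand number of the identity map `id : ℓ_p^N → ℓ_q^N`. -/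
noncomputable def gelfandNumber (p q : ℝ≥0∞) (N n : ℕ) : ℝ :=
  sInf { r : ℝ | ∃ M : Submodule ℝ (Fin N → ℝ), N - Module.finrank ℝ (↥M) < n ∧
    r = sSup { s : ℝ | ∃ x ∈ M, pNorm p x ≤ 1 ∧ s = pNorm q x } }

/-- The n-th approximation number of the identity map `id : ℓ_p^N → ℓ_q^N`. -/
noncomputable def approxNumber (p q : ℝ≥0∞) (N n : ℕ) : ℝ :=
  sInf { r : ℝ | ∃ L : (Fin N → ℝ) →ₗ[ℝ] (Fin N → ℝ),
    Module.finrank ℝ (↥(LinearMap.range L)) < n ∧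
    r = sSup { s : ℝ | ∃ x : Fin N → ℝ, pNorm p x ≤ 1 ∧ s = pNorm q (x - L x) } }

/-!
Upper bound: the projection onto `n - 1` coordinates has rank `< n`, and its error `x - L x` is
supported on `N - n + 1` coordinates, where the power-mean inequality bounds the `ℓ_{p₂}` quasi-norm
by `(N - n + 1)^{1/p₂ - 1/p₁}` times the `ℓ_{p₁}` norm.

Lower bound: a subspace `M` of codimension `< n` has dimension `≥ N - n + 1`. An extreme point `x`
of `M ∩ [-1, 1]^N` has at least `dim M` coordinates equal to `±1`, since a nonzero `y ∈ M` vanishing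
on those coordinates would let `x` move in both directions `± ε y`. On such a flat vector the ratio
of the two quasi-norms is at least `(N - n + 1)^{1/p₂ - 1/p₁}`.

Finally `c_n ≤ a_n`, by restricting to the kernel of an approximating map.
-/

open Finset Module Topology

section PNorm

variable {N : ℕ} {p : ℝ≥0∞}

lemma pNorm_top (x : Fin N → ℝ) : pNorm ∞ x = ‖x‖ := by
  rw [pNorm, if_pos rfl]
  refine le_antisymm (Real.iSup_le (fun i => norm_le_pi_norm x i) (norm_nonneg x)) ?_
  refine (pi_norm_le_iff_of_nonneg (Real.iSup_nonneg fun i => abs_nonneg (x i))).2 fun i => ?_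
  exact le_ciSup (f := fun j => |x j|) (Set.finite_range _).bddAbove i

lemma pNorm_of_ne_top (hp : p ≠ ∞) (x : Fin N → ℝ) :
    pNorm p x = (∑ i, |x i| ^ p.toReal) ^ (1 / p.toReal) :=
  if_neg hp

lemma pNorm_nonneg (p : ℝ≥0∞) (x : Fin N → ℝ) : 0 ≤ pNorm p x := by
  by_cases hp : p = ∞
  · rw [hp, pNorm_top]; positivity
  · rw [pNorm_of_ne_top hp]; positivity

lemma pNorm_smul (hp : 0 < p) (c : ℝ) (x : Fin N → ℝ) : pNorm p (c • x) = |c| * pNorm p x := by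
  by_cases hp' : p = ∞
  · rw [hp', pNorm_top, pNorm_top, norm_smul, Real.norm_eq_abs]
  have hr : 0 < p.toReal := ENNReal.toReal_pos hp.ne' hp'
  simp only [pNorm_of_ne_top hp', Pi.smul_apply, smul_eq_mul, abs_mul,
    Real.mul_rpow (abs_nonneg c) (abs_nonneg _), ← Finset.mul_sum]
  rw [Real.mul_rpow (by positivity) (by positivity), ← Real.rpow_mul (abs_nonneg c),
    mul_one_div_cancel hr.ne', Real.rpow_one]

lemma pNorm_zero (hp : 0 < p) : pNorm p (0 : Fin N → ℝ) = 0 := by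
  simpa using pNorm_smul hp 0 (0 : Fin N → ℝ)

lemma pNorm_mono {x y : Fin N → ℝ} (h : ∀ i, |x i| ≤ |y i|) : pNorm p x ≤ pNorm p y := by
  by_cases hp : p = ∞
  · rw [hp, pNorm_top, pNorm_top]
    exact pi_norm_le_iff_of_nonneg (norm_nonneg y) |>.2 fun i => (h i).trans (norm_le_pi_norm y i)
  rw [pNorm_of_ne_top hp, pNorm_of_ne_top hp]
  exact Real.rpow_le_rpow (by positivity)
    (sum_le_sum fun i _ => Real.rpow_le_rpow (abs_nonneg _) (h i) ENNReal.toReal_nonneg)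
    (by positivity)

lemma norm_le_pNorm (hp : 0 < p) (x : Fin N → ℝ) : ‖x‖ ≤ pNorm p x := by
  by_cases hp' : p = ∞
  · rw [hp', pNorm_top]
  have hr : 0 < p.toReal := ENNReal.toReal_pos hp.ne' hp'
  refine (pi_norm_le_iff_of_nonneg (pNorm_nonneg p x)).2 fun i => ?_
  calc ‖x i‖ = (|x i| ^ p.toReal) ^ (1 / p.toReal) := by
        rw [← Real.rpow_mul (abs_nonneg _), mul_one_div_cancel hr.ne', Real.rpow_one,
          Real.norm_eq_abs]
    _ ≤ pNorm p x := by
        rw [pNorm_of_ne_top hp']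
        gcongr
        exact single_le_sum (f := fun j => |x j| ^ p.toReal) (fun j _ => by positivity)
          (mem_univ i)

end PNorm

lemma Real.Lq_le_card_rpow_mul_Lp {ι : Type*} (s : Finset ι) {f : ι → ℝ} (hf : ∀ i ∈ s, 0 ≤ f i)
    {q p : ℝ} (hq : 0 < q) (hqp : q ≤ p) :
    (∑ i ∈ s, f i ^ q) ^ (1 / q) ≤ (#s : ℝ) ^ (1 / q - 1 / p) * (∑ i ∈ s, f i ^ p) ^ (1 / p) := by
  have hp : 0 < p := hq.trans_le hqp
  have hpow : ∀ i ∈ s, (f i ^ q) ^ (p / q) = f i ^ p := fun i hi => by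
    rw [← Real.rpow_mul (hf i hi), mul_div_cancel₀ p hq.ne']
  calc (∑ i ∈ s, f i ^ q) ^ (1 / q) = ((∑ i ∈ s, f i ^ q) ^ (p / q)) ^ (1 / p) := by
        rw [← Real.rpow_mul (sum_nonneg fun i hi => Real.rpow_nonneg (hf i hi) q)]
        field_simp
    _ ≤ ((#s : ℝ) ^ (p / q - 1) * ∑ i ∈ s, (f i ^ q) ^ (p / q)) ^ (1 / p) := by
        gcongr
        · exact Real.rpow_nonneg (sum_nonneg fun i hi => Real.rpow_nonneg (hf i hi) q) _
        · exact Real.rpow_sum_le_const_mul_sum_rpow_of_nonneg s ((one_le_div hq).2 hqp)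
            fun i hi => Real.rpow_nonneg (hf i hi) q
    _ = (#s : ℝ) ^ (1 / q - 1 / p) * (∑ i ∈ s, f i ^ p) ^ (1 / p) := by
        rw [sum_congr rfl hpow, Real.mul_rpow (by positivity)
            (sum_nonneg fun i hi => Real.rpow_nonneg (hf i hi) p), ← Real.rpow_mul (by positivity)]
        congr 2
        field_simp

lemma one_div_toReal_sub_one_div_toReal_nonneg {p q : ℝ≥0∞} (hq : 0 < q) (hqp : q ≤ p) :
    0 ≤ 1 / q.toReal - 1 / p.toReal := by
  rw [one_div, one_div, ← ENNReal.toReal_inv, ← ENNReal.toReal_inv, sub_nonneg]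
  exact ENNReal.toReal_mono (ENNReal.inv_ne_top.2 hq.ne') (ENNReal.inv_le_inv.2 hqp)

section PNormComparison

variable {N : ℕ} {p q : ℝ≥0∞}

lemma pNorm_eq_sum_of_forall_notMem (hp : 0 < p) (hp' : p ≠ ∞) {x : Fin N → ℝ}
    (s : Finset (Fin N)) (hx : ∀ i ∉ s, x i = 0) :
    pNorm p x = (∑ i ∈ s, |x i| ^ p.toReal) ^ (1 / p.toReal) := by
  rw [pNorm_of_ne_top hp', ← sum_subset (subset_univ s) fun i _ hi => by
    rw [hx i hi, abs_zero, Real.zero_rpow (ENNReal.toReal_pos hp.ne' hp').ne']]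

lemma pNorm_le_card_rpow_mul_norm (hq : 0 < q) {x : Fin N → ℝ} (s : Finset (Fin N))
    (hx : ∀ i ∉ s, x i = 0) : pNorm q x ≤ (#s : ℝ) ^ (1 / q.toReal) * ‖x‖ := by
  by_cases hq' : q = ∞
  · simp [hq', pNorm_top]
  have hr : 0 < q.toReal := ENNReal.toReal_pos hq.ne' hq'
  calc pNorm q x = (∑ i ∈ s, |x i| ^ q.toReal) ^ (1 / q.toReal) :=
        pNorm_eq_sum_of_forall_notMem hq hq' s hx
    _ ≤ (∑ _i ∈ s, ‖x‖ ^ q.toReal) ^ (1 / q.toReal) := by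
        gcongr with i
        exact norm_le_pi_norm x i
    _ = (#s : ℝ) ^ (1 / q.toReal) * ‖x‖ := by
        rw [sum_const, nsmul_eq_mul, Real.mul_rpow (by positivity) (by positivity),
          ← Real.rpow_mul (norm_nonneg x), mul_one_div_cancel hr.ne', Real.rpow_one]

lemma pNorm_le_card_rpow_mul_pNorm (hq : 0 < q) (hqp : q ≤ p) {x : Fin N → ℝ}
    (s : Finset (Fin N)) (hx : ∀ i ∉ s, x i = 0) :
    pNorm q x ≤ (#s : ℝ) ^ (1 / q.toReal - 1 / p.toReal) * pNorm p x := by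
  by_cases hp : p = ∞
  · simpa [hp, pNorm_top] using pNorm_le_card_rpow_mul_norm hq s hx
  have hq' : q ≠ ∞ := ne_top_of_le_ne_top hp hqp
  rw [pNorm_eq_sum_of_forall_notMem hq hq' s hx,
    pNorm_eq_sum_of_forall_notMem (hq.trans_le hqp) hp s hx]
  exact Real.Lq_le_card_rpow_mul_Lp s (fun i _ => abs_nonneg (x i))
    (ENNReal.toReal_pos hq.ne' hq') (ENNReal.toReal_mono hp hqp)

lemma card_rpow_mul_pNorm_le (hq : 0 < q) (hqp : q ≤ p) {x : Fin N → ℝ} (hx : ‖x‖ ≤ 1)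
    (t : Finset (Fin N)) (ht : ∀ i ∈ t, |x i| = 1) :
    (#t : ℝ) ^ (1 / q.toReal - 1 / p.toReal) * pNorm p x ≤ pNorm q x := by
  by_cases hq' : q = ∞
  · simp [hq', top_le_iff.1 (hq' ▸ hqp)]
  have hr : 0 < q.toReal := ENNReal.toReal_pos hq.ne' hq'
  have hx1 : ∀ i, |x i| ≤ 1 := fun i => (norm_le_pi_norm x i).trans hx
  set A := ∑ i, |x i| ^ q.toReal
  have hA : (#t : ℝ) ≤ A := by
    calc (#t : ℝ) = ∑ i ∈ t, |x i| ^ q.toReal := by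
          rw [sum_congr rfl fun i hi => by rw [ht i hi, Real.one_rpow], sum_const, nsmul_one]
      _ ≤ A := sum_le_sum_of_subset_of_nonneg (subset_univ t) fun i _ _ => by positivity
  rw [pNorm_of_ne_top hq']
  by_cases hp : p = ∞
  · simp only [hp, pNorm_top, ENNReal.toReal_top, div_zero, sub_zero]
    calc (#t : ℝ) ^ (1 / q.toReal) * ‖x‖ ≤ (#t : ℝ) ^ (1 / q.toReal) * 1 := by gcongr
      _ ≤ A ^ (1 / q.toReal) := by rw [mul_one]; gcongr
  have hrs : q.toReal ≤ p.toReal := ENNReal.toReal_mono hp hqp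
  have hBA : ∑ i, |x i| ^ p.toReal ≤ A := sum_le_sum fun i _ =>
    Real.rpow_le_rpow_of_exponent_ge' (abs_nonneg _) (hx1 i) hr.le hrs
  calc (#t : ℝ) ^ (1 / q.toReal - 1 / p.toReal) * pNorm p x
      ≤ A ^ (1 / q.toReal - 1 / p.toReal) * A ^ (1 / p.toReal) := by
        rw [pNorm_of_ne_top hp]
        have := one_div_toReal_sub_one_div_toReal_nonneg hq hqp
        gcongr
    _ = A ^ (1 / q.toReal) := by
        rw [← Real.rpow_add' (by positivity) (by simpa using hr.ne'), sub_add_cancel]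

end PNormComparison

section FlatVector

variable {ι : Type*} [Fintype ι] {M : Submodule ℝ (ι → ℝ)} {x : ι → ℝ}

lemma eq_zero_of_mem_extremePoints_of_forall_abs_eq_one
    (hx : x ∈ ((M : Set (ι → ℝ)) ∩ Metric.closedBall 0 1).extremePoints ℝ) {y : ι → ℝ}
    (hy : y ∈ M) (hxy : ∀ i, |x i| = 1 → y i = 0) : y = 0 := by
  have hx1 : ∀ i, |x i| ≤ 1 := fun i =>
    (norm_le_pi_norm x i).trans (mem_closedBall_zero_iff.1 hx.1.2)
  have hnear : ∀ᶠ s in 𝓝 (0 : ℝ), ∀ i, |x i + s * y i| ≤ 1 := by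
    refine Filter.eventually_all.2 fun i => ?_
    by_cases hi : |x i| = 1
    · simp [hxy i hi, hi]
    have hcont : Continuous fun s : ℝ => |x i + s * y i| := by fun_prop
    have hlt : |x i + 0 * y i| < 1 := by simpa using lt_of_le_of_ne (hx1 i) hi
    exact (hcont.continuousAt.eventually (gt_mem_nhds hlt)).mono fun _ h => h.le
  obtain ⟨ε, hε, hball⟩ := Metric.eventually_nhds_iff.1 hnear
  have hmem : ∀ s : ℝ, |s| < ε → x + s • y ∈ (M : Set (ι → ℝ)) ∩ Metric.closedBall 0 1 :=
    fun s hs => ⟨M.add_mem hx.1.1 (M.smul_mem s hy), mem_closedBall_zero_iff.2 <|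
      (pi_norm_le_iff_of_nonneg zero_le_one).2 fun i => by
        simpa using hball (y := s) (by simpa using hs) i⟩
  have hε2 : |ε / 2| < ε := by rw [abs_of_pos (half_pos hε)]; exact half_lt_self hε
  have hseg : x ∈ openSegment ℝ (x + (ε / 2) • y) (x + (-(ε / 2)) • y) :=
    ⟨1 / 2, 1 / 2, by norm_num, by norm_num, by norm_num, by module⟩
  have hfix : x + (ε / 2) • y = x :=
    hx.2 (hmem _ hε2) (hmem _ (by rwa [abs_neg])) hseg
  simpa [hε.ne'] using hfix

lemma finrank_le_card_abs_eq_one_of_mem_extremePoints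
    (hx : x ∈ ((M : Set (ι → ℝ)) ∩ Metric.closedBall 0 1).extremePoints ℝ) :
    finrank ℝ M ≤ #{i | |x i| = 1} := by
  set t : Finset ι := {i | |x i| = 1}
  let restrict : (ι → ℝ) →ₗ[ℝ] (t → ℝ) := LinearMap.funLeft ℝ ℝ Subtype.val
  have hinj : Function.Injective (restrict ∘ₗ M.subtype) := by
    refine (injective_iff_map_eq_zero _).2 fun y hy => Subtype.ext ?_
    refine eq_zero_of_mem_extremePoints_of_forall_abs_eq_one hx y.2 fun i hi => ?_
    exact congrFun hy ⟨i, mem_filter.2 ⟨mem_univ i, hi⟩⟩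
  simpa using LinearMap.finrank_le_finrank_of_injective hinj

lemma exists_mem_norm_le_one_finrank_le_card_abs_eq_one (M : Submodule ℝ (ι → ℝ)) :
    ∃ x ∈ M, ‖x‖ ≤ 1 ∧ finrank ℝ M ≤ #{i | |x i| = 1} := by
  have hcpt : IsCompact ((M : Set (ι → ℝ)) ∩ Metric.closedBall 0 1) :=
    (isCompact_closedBall 0 1).inter_left M.closed_of_finiteDimensional
  obtain ⟨x, hx⟩ := hcpt.extremePoints_nonempty ⟨0, M.zero_mem, by simp⟩
  exact ⟨x, hx.1.1, mem_closedBall_zero_iff.1 hx.1.2,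
    finrank_le_card_abs_eq_one_of_mem_extremePoints hx⟩

end FlatVector

section SNumbers

variable {p q : ℝ≥0∞} {N n : ℕ}

lemma bddAbove_approx_set (hp : 0 < p) (hq : 0 < q) (L : (Fin N → ℝ) →ₗ[ℝ] (Fin N → ℝ)) :
    BddAbove {s : ℝ | ∃ x : Fin N → ℝ, pNorm p x ≤ 1 ∧ s = pNorm q (x - L x)} := by
  let L' := LinearMap.toContinuousLinearMap L
  refine ⟨(N : ℝ) ^ (1 / q.toReal) * (1 + ‖L'‖ * 1), ?_⟩
  rintro _ ⟨x, hx, rfl⟩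
  have hx1 : ‖x‖ ≤ 1 := (norm_le_pNorm hp x).trans hx
  calc pNorm q (x - L x) ≤ (N : ℝ) ^ (1 / q.toReal) * ‖x - L x‖ := by
        simpa using pNorm_le_card_rpow_mul_norm hq univ (x := x - L x) (by simp)
    _ ≤ (N : ℝ) ^ (1 / q.toReal) * (1 + ‖L'‖ * 1) := by
        gcongr
        exact (norm_sub_le _ _).trans (add_le_add hx1 (L'.le_opNorm_of_le hx1))

lemma bddAbove_gelfand_set (hp : 0 < p) (hq : 0 < q) (M : Submodule ℝ (Fin N → ℝ)) :
    BddAbove {s : ℝ | ∃ x ∈ M, pNorm p x ≤ 1 ∧ s = pNorm q x} :=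
  (bddAbove_approx_set hp hq 0).mono <| by
    rintro _ ⟨x, -, hx, rfl⟩
    exact ⟨x, hx, by simp⟩

lemma approxNumber_le_sSup (L : (Fin N → ℝ) →ₗ[ℝ] (Fin N → ℝ))
    (hL : finrank ℝ (LinearMap.range L) < n) :
    approxNumber p q N n ≤ sSup {s : ℝ | ∃ x : Fin N → ℝ, pNorm p x ≤ 1 ∧ s = pNorm q (x - L x)} :=
  csInf_le ⟨0, by
    rintro _ ⟨L, -, rfl⟩
    exact Real.sSup_nonneg <| by rintro _ ⟨x, -, rfl⟩; exact pNorm_nonneg q _⟩ ⟨L, hL, rfl⟩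

lemma gelfandNumber_le_sSup (M : Submodule ℝ (Fin N → ℝ)) (hM : N - finrank ℝ M < n) :
    gelfandNumber p q N n ≤ sSup {s : ℝ | ∃ x ∈ M, pNorm p x ≤ 1 ∧ s = pNorm q x} :=
  csInf_le ⟨0, by
    rintro _ ⟨M, -, rfl⟩
    exact Real.sSup_nonneg <| by rintro _ ⟨x, -, -, rfl⟩; exact pNorm_nonneg q _⟩ ⟨M, hM, rfl⟩

theorem gelfandNumber_le_approxNumber (hp : 0 < p) (hq : 0 < q) (hn : 0 < n) :
    gelfandNumber p q N n ≤ approxNumber p q N n := by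
  refine le_csInf ⟨_, 0, by rwa [LinearMap.range_zero, finrank_bot], rfl⟩ ?_
  rintro _ ⟨L, hL, rfl⟩
  have hker : N - finrank ℝ (LinearMap.ker L) < n := by
    have := L.finrank_range_add_finrank_ker
    simp only [finrank_fin_fun] at this
    omega
  refine (gelfandNumber_le_sSup _ hker).trans <|
    csSup_le_csSup (bddAbove_approx_set hp hq L) ⟨0, 0, zero_mem _, by simp [pNorm_zero hp, pNorm_zero hq]⟩ ?_
  rintro _ ⟨x, hxL, hx, rfl⟩
  exact ⟨x, hx, by rw [LinearMap.mem_ker.1 hxL, sub_zero]⟩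

theorem card_rpow_le_gelfandNumber (hq : 0 < q) (hqp : q ≤ p) (hn : 0 < n) (hnN : n ≤ N) :
    ((N - n + 1 : ℕ) : ℝ) ^ (1 / q.toReal - 1 / p.toReal) ≤ gelfandNumber p q N n := by
  have hp : 0 < p := hq.trans_le hqp
  refine le_csInf ⟨_, ⊤, by simpa using hn, rfl⟩ ?_
  rintro _ ⟨M, hM, rfl⟩
  obtain ⟨x, hxM, hx1, hdim⟩ := exists_mem_norm_le_one_finrank_le_card_abs_eq_one M
  set t : Finset (Fin N) := {i | |x i| = 1}
  obtain ⟨i, hi⟩ : t.Nonempty := card_pos.1 (by omega)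
  have hpos : 0 < pNorm p x :=
    one_pos.trans_le <| calc (1 : ℝ) = ‖x i‖ := (mem_filter.1 hi).2.symm
      _ ≤ pNorm p x := (norm_le_pi_norm x i).trans (norm_le_pNorm hp x)
  have hunit : pNorm p ((pNorm p x)⁻¹ • x) = 1 := by
    rw [pNorm_smul hp, abs_of_pos (inv_pos.2 hpos), inv_mul_cancel₀ hpos.ne']
  calc ((N - n + 1 : ℕ) : ℝ) ^ (1 / q.toReal - 1 / p.toReal)
      ≤ (#t : ℝ) ^ (1 / q.toReal - 1 / p.toReal) := by
        have := one_div_toReal_sub_one_div_toReal_nonneg hq hqp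
        gcongr
        omega
    _ ≤ pNorm q ((pNorm p x)⁻¹ • x) := by
        rw [pNorm_smul hq, abs_of_pos (inv_pos.2 hpos), le_inv_mul_iff₀ hpos, mul_comm]
        exact card_rpow_mul_pNorm_le hq hqp hx1 t fun j hj => (mem_filter.1 hj).2
    _ ≤ sSup {s : ℝ | ∃ x ∈ M, pNorm p x ≤ 1 ∧ s = pNorm q x} :=
        le_csSup (bddAbove_gelfand_set hp hq M) ⟨_, M.smul_mem _ hxM, hunit.le, rfl⟩

theorem approxNumber_le_card_rpow (hq : 0 < q) (hqp : q ≤ p) (hn : 0 < n) (hnN : n ≤ N) :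
    approxNumber p q N n ≤ ((N - n + 1 : ℕ) : ℝ) ^ (1 / q.toReal - 1 / p.toReal) := by
  obtain ⟨F, -, hF⟩ := exists_subset_card_eq (s := (univ : Finset (Fin N))) (n := n - 1)
    (by rw [card_univ, Fintype.card_fin]; omega)
  let L := (Matrix.diagonal fun i => if i ∈ F then (1 : ℝ) else 0).mulVecLin
  have hrank : finrank ℝ (LinearMap.range L) < n := by
    change Matrix.rank _ < n
    rw [Matrix.rank_diagonal]
    simp only [ne_eq, ite_eq_right_iff, one_ne_zero, imp_false, not_not, Fintype.card_coe]
    omega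
  have hcoord : ∀ x i, (x - L x) i = if i ∈ F then 0 else x i := by
    intro x i
    simp only [L, Matrix.mulVecBilin_apply, Pi.sub_apply, Matrix.mulVec_diagonal, ite_mul,
      one_mul, zero_mul]
    split_ifs <;> simp
  refine (approxNumber_le_sSup L hrank).trans (Real.sSup_le ?_ (by positivity))
  rintro _ ⟨x, hx, rfl⟩
  calc pNorm q (x - L x) ≤ (#Fᶜ : ℝ) ^ (1 / q.toReal - 1 / p.toReal) * pNorm p (x - L x) :=
        pNorm_le_card_rpow_mul_pNorm hq hqp Fᶜ fun i hi => by
          rw [hcoord, if_pos (by simpa using hi)]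
    _ ≤ (#Fᶜ : ℝ) ^ (1 / q.toReal - 1 / p.toReal) * 1 := by
        gcongr
        refine (pNorm_mono fun i => ?_).trans hx
        rw [hcoord]
        split_ifs <;> simp
    _ = ((N - n + 1 : ℕ) : ℝ) ^ (1 / q.toReal - 1 / p.toReal) := by
        rw [mul_one, card_compl, hF, Fintype.card_fin]
        congr 2
        omega

end SNumbers

/-- For `0 < p₂ ≤ p₁ ≤ ∞` and `1 ≤ n ≤ N`,
`a_n(id : ℓ_{p₁}^N → ℓ_{p₂}^N) = c_n(id : ℓ_{p₁}^N → ℓ_{p₂}^N) = (N-n+1)^{1/p₂-1/p₁}`. -/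
theorem approx_eq_gelfand_diag (p₁ p₂ : ℝ≥0∞) (h1 : 0 < p₂) (h2 : p₂ ≤ p₁)
    (N n : ℕ) (hn : 1 ≤ n) (hnN : n ≤ N) :
    approxNumber p₁ p₂ N n = ((N : ℝ) - n + 1) ^ (1 / p₂.toReal - 1 / p₁.toReal) ∧
    gelfandNumber p₁ p₂ N n = ((N : ℝ) - n + 1) ^ (1 / p₂.toReal - 1 / p₁.toReal) := by
  have hcast : ((N - n + 1 : ℕ) : ℝ) = (N : ℝ) - n + 1 := by
    rw [Nat.cast_add, Nat.cast_sub hnN, Nat.cast_one]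
  have hlow := card_rpow_le_gelfandNumber h1 h2 hn hnN
  have hmid := gelfandNumber_le_approxNumber (h1.trans_le h2) h1 hn (N := N)
  have hup := approxNumber_le_card_rpow h1 h2 hn hnN
  rw [hcast] at hlow hup
  exact ⟨le_antisymm hup (hlow.trans hmid), le_antisymm (hmid.trans hup) hlow⟩
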